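/- Fix R > 0, ε > 0, k > 0, τ̄ > 0 and define τ̂*, K_δ, τ̂, and h_τ̂(ξ,ν) = ‖ξ + τ̂(ξ,ν)·ν‖² − (2R)² as in the future-focused CBF construction, together with the relaxed future-focused barrier H(ξ,ν) = h_τ̂(ξ,ν) + α₀(h₀(ξ)), where h₀(ξ) = ‖ξ‖² − (2R)² and α₀ : ℝ → ℝ satisfies α₀(0) = 0. Let ξ, ν ∈ ℝ² with ν ≠ 0 satisfy ‖ξ‖ = 2R (so h₀(ξ) = 0), H(ξ,ν) = 0, and τ̂(ξ,ν) ≤ 2·τ̂*(ξ,ν). Then ⟪ξ,ν⟫ ≥ 0. -/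

import Mathlib

open RealInnerProductSpace

/-- The smooth switch `K_δ(s) = 1/2 + (1/2)·tanh(k(s − δ))`. -/
noncomputable def Ksw (k δ s : ℝ) : ℝ :=
  1 / 2 + 1 / 2 * Real.tanh (k * (s - δ))

/-- The regularized minimizing time `τ̂*(ξ,ν) = −⟪ξ,ν⟫/(‖ν‖² + ε)`. -/
noncomputable def tauHatStar (ε : ℝ) (ξ ν : EuclideanSpace ℝ (Fin 2)) : ℝ :=
  -⟪ξ, ν⟫ / (‖ν‖ ^ 2 + ε)

/-- The smoothed look-ahead time `τ̂ = τ̂*·K₀(τ̂*) + (τ̄ − τ̂*)·K_τ̄(τ̂*)`. -/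
noncomputable def tauHat (ε k τbar : ℝ) (ξ ν : EuclideanSpace ℝ (Fin 2)) : ℝ :=
  tauHatStar ε ξ ν * Ksw k 0 (tauHatStar ε ξ ν) +
    (τbar - tauHatStar ε ξ ν) * Ksw k τbar (tauHatStar ε ξ ν)

/-- The future-focused control barrier function `h_τ̂(ξ,ν) = ‖ξ + τ̂·ν‖² − (2R)²`. -/
noncomputable def hff (R ε k τbar : ℝ) (ξ ν : EuclideanSpace ℝ (Fin 2)) : ℝ :=
  ‖ξ + tauHat ε k τbar ξ ν • ν‖ ^ 2 - (2 * R) ^ 2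

/-- The nominal (physical) barrier `h₀(ξ) = ‖ξ‖² − (2R)²`. -/
noncomputable def h0 (R : ℝ) (ξ : EuclideanSpace ℝ (Fin 2)) : ℝ :=
  ‖ξ‖ ^ 2 - (2 * R) ^ 2

/-!
Suppose `⟪ξ, ν⟫ < 0`. Then `τ̂* > 0`, and since the switch `K_δ` is positive and decreasing
in `δ`, also `τ̂ ≥ τ̄·K_τ̄(τ̂*) > 0`. On the boundary `h₀ = 0` the condition `H = 0` says that
`ξ + τ̂ν` lies on the same circle as `ξ`, so `τ̂‖ν‖² = −2⟪ξ,ν⟫ = 2τ̂*(‖ν‖² + ε)`: `τ̂` is the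
second intersection time of the line `ξ + tν` with that circle. As `ε > 0`, this exceeds
`2τ̂*‖ν‖² ≥ τ̂‖ν‖²`, a contradiction.
-/

theorem Real.tanh_monotone : Monotone Real.tanh := by
  intro a b hab
  by_contra! h
  have := Real.artanh_lt_artanh (Real.neg_one_lt_tanh b) (Real.tanh_lt_one a) h
  rw [Real.artanh_tanh, Real.artanh_tanh] at this
  linarith

theorem Ksw_pos (k δ s : ℝ) : 0 < Ksw k δ s := by
  have := Real.neg_one_lt_tanh (k * (s - δ))
  unfold Ksw
  linarith

theorem Ksw_antitone_delta {k : ℝ} (hk : 0 ≤ k) (s : ℝ) : Antitone fun δ ↦ Ksw k δ s := by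
  intro δ δ' hδ
  have := Real.tanh_monotone (mul_le_mul_of_nonneg_left (sub_le_sub_left hδ s) hk)
  simp only [Ksw]
  linarith

theorem tauHat_pos {ε k τbar : ℝ} (hk : 0 ≤ k) (hτ : 0 < τbar)
    {ξ ν : EuclideanSpace ℝ (Fin 2)} (ht : 0 ≤ tauHatStar ε ξ ν) : 0 < tauHat ε k τbar ξ ν := by
  set t := tauHatStar ε ξ ν
  have hK : Ksw k τbar t ≤ Ksw k 0 t := Ksw_antitone_delta hk t hτ.le
  have hKpos : 0 < τbar * Ksw k τbar t := mul_pos hτ (Ksw_pos k τbar t)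
  have hdiff : 0 ≤ t * (Ksw k 0 t - Ksw k τbar t) := mul_nonneg ht (sub_nonneg.mpr hK)
  calc (0 : ℝ) < t * (Ksw k 0 t - Ksw k τbar t) + τbar * Ksw k τbar t := by linarith
    _ = tauHat ε k τbar ξ ν := by unfold tauHat; ring

theorem tauHatStar_mul_norm_sq_add (ε : ℝ) (hε : 0 < ε) (ξ ν : EuclideanSpace ℝ (Fin 2)) :
    tauHatStar ε ξ ν * (‖ν‖ ^ 2 + ε) = -⟪ξ, ν⟫ :=
  div_mul_cancel₀ _ (by positivity)

theorem mul_norm_sq_eq_neg_two_inner_of_norm_add_smul_sq {E : Type*}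
    [NormedAddCommGroup E] [InnerProductSpace ℝ E] {x v : E} {T : ℝ} (hT : T ≠ 0)
    (h : ‖x + T • v‖ ^ 2 = ‖x‖ ^ 2) : T * ‖v‖ ^ 2 = -2 * ⟪x, v⟫ := by
  rw [norm_add_sq_real, real_inner_smul_right, norm_smul, mul_pow, Real.norm_eq_abs, sq_abs] at h
  have : T * (T * ‖v‖ ^ 2 + 2 * ⟪x, v⟫) = 0 := by linear_combination h
  linarith [(mul_eq_zero.mp this).resolve_left hT]

theorem rffcbf_boundary_nondecreasing_general
    (R ε k τbar : ℝ) (hε : 0 < ε) (hk : 0 < k) (hτ : 0 < τbar)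
    (α₀ : ℝ → ℝ) (hα₀ : α₀ 0 = 0)
    (ξ ν : EuclideanSpace ℝ (Fin 2))
    (hbd : ‖ξ‖ = 2 * R)
    (hH : hff R ε k τbar ξ ν + α₀ (h0 R ξ) = 0)
    (h2 : tauHat ε k τbar ξ ν ≤ 2 * tauHatStar ε ξ ν) :
    ⟪ξ, ν⟫ ≥ 0 := by
  by_contra! hneg
  set t := tauHatStar ε ξ ν
  set T := tauHat ε k τbar ξ ν
  have ht : 0 < t := div_pos (neg_pos.mpr hneg) (by positivity)
  have hT : 0 < T := tauHat_pos hk.le hτ ht.le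
  have hboundary : h0 R ξ = 0 := by rw [h0, hbd, sub_self]
  have hcircle : ‖ξ + T • ν‖ ^ 2 = ‖ξ‖ ^ 2 := by
    rw [hboundary, hα₀, add_zero, hff, sub_eq_zero] at hH
    rw [hH, hbd]
  have hT_eq := mul_norm_sq_eq_neg_two_inner_of_norm_add_smul_sq hT.ne' hcircle
  have ht_eq := tauHatStar_mul_norm_sq_add ε hε ξ ν
  have hle : T * ‖ν‖ ^ 2 ≤ 2 * t * ‖ν‖ ^ 2 := mul_le_mul_of_nonneg_right h2 (by positivity)
  linarith [mul_pos ht hε]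

/-- On the simultaneous zero set of the relaxed future-focused barrier
`H = h_τ̂ + α₀(h₀)` and the physical barrier `h₀`, if `τ̂ ≤ 2τ̂*` then `⟪ξ,ν⟫ ≥ 0`. -/
theorem rffcbf_boundary_nondecreasing
    (R ε k τbar : ℝ) (hR : 0 < R) (hε : 0 < ε) (hk : 0 < k) (hτ : 0 < τbar)
    (α₀ : ℝ → ℝ) (hα₀ : α₀ 0 = 0)
    (ξ ν : EuclideanSpace ℝ (Fin 2)) (hν : ν ≠ 0)
    (hbd : ‖ξ‖ = 2 * R)
    (hH : hff R ε k τbar ξ ν + α₀ (h0 R ξ) = 0)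
    (h2 : tauHat ε k τbar ξ ν ≤ 2 * tauHatStar ε ξ ν) :
    ⟪ξ, ν⟫ ≥ 0 :=
  rffcbf_boundary_nondecreasing_general R ε k τbar hε hk hτ α₀ hα₀ ξ ν hbd hH h2
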